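/- arXiv:2410.20179 — 5 statements merged into one kernel-verified Lean document; each statement's English description precedes it below -/
import Mathlib

section
/- Let F be a holomorphic univalent function on the unit disk with F(0)=0, F'(0)=1, and suppose sup_{|z|≤1}|F(z)−z| ≤ 2, and F(z) = z + C z^{q+1} + O(z^{q+2}) near 0 with C ≠ 0. If N(r) denotes the number of fixed points of F in the punctured disk D(0,r)\{0} counted with multiplicity, then for every r ∈ (0,1), N(r) ≤ (log 2 − log|C|)/|log r|. -/
/-!
Away from the origin the fixed points of `F` are exactly the zeros of `g`, with the same
multiplicities, since `F z - z = z ^ (q + 1) * g z`. On the circle of radius `ρ < 1` the bound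
`‖F z - z‖ ≤ 2` gives `‖g‖ ≤ 2 / ρ ^ (q + 1)`, so Jensen's inequality bounds the number of zeros
of `g` in the closed disk of radius `r` by `log (2 / (ρ ^ (q + 1) ‖C‖)) / log (ρ / r)`.
Letting `ρ → 1` yields `(log 2 - log ‖C‖) / |log r|`.
-/

open Metric Set Filter Topology MeromorphicOn

theorem analyticOrderAt_pow_mul_of_ne_zero {𝕜 : Type*} [NontriviallyNormedField 𝕜]
    {g : 𝕜 → 𝕜} {z : 𝕜} (hg : AnalyticAt 𝕜 g z) (hz : z ≠ 0) (k : ℕ) :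
    analyticOrderAt (fun w => w ^ k * g w) z = analyticOrderAt g z := by
  have hpow : AnalyticAt 𝕜 (· ^ k) z := by fun_prop
  change analyticOrderAt ((· ^ k) * g) z = _
  rw [analyticOrderAt_mul hpow hg, hpow.analyticOrderAt_eq_zero.mpr (pow_ne_zero k hz), zero_add]

theorem AnalyticOnNhd.sum_le_finsum_divisor {𝕜 E : Type*} [NontriviallyNormedField 𝕜]
    [NormedAddCommGroup E] [NormedSpace 𝕜 E] {f : 𝕜 → E} {U : Set 𝕜}
    (hf : AnalyticOnNhd 𝕜 f U) (hU : IsCompact U) {Z : Finset 𝕜} (hZ : ↑Z ⊆ U)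
    {m : 𝕜 → ℕ} (hm : ∀ z ∈ Z, analyticOrderAt f z = m z) :
    ((∑ z ∈ Z, m z : ℕ) : ℤ) ≤ ∑ᶠ u, divisor f U u := by
  classical
  have hsupp := (divisor f U).finiteSupport hU
  rw [finsum_eq_sum_of_support_subset _ (s := Z ∪ hsupp.toFinset) (by simp), Nat.cast_sum]
  refine le_trans (le_of_eq (Finset.sum_congr rfl fun z hz => ?_))
    (Finset.sum_le_sum_of_subset_of_nonneg Finset.subset_union_left
      fun u _ _ => hf.divisor_nonneg u)
  rw [hf.divisor_apply (hZ hz), hm z hz]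
  rfl

theorem AnalyticOnNhd.sum_divisor_le_of_norm_pow_mul_le {g : ℂ → ℂ} {k : ℕ} {M r : ℝ}
    (hg : AnalyticOnNhd ℂ g (ball 0 1)) (hg0 : g 0 ≠ 0) (hM : 1 ≤ M)
    (hbound : ∀ w ∈ ball (0 : ℂ) 1, ‖w‖ ^ k * ‖g w‖ ≤ M) (hr : r ∈ Ioo 0 1) :
    ((∑ᶠ u, divisor g (closedBall 0 r) u : ℤ) : ℝ) ≤
      Real.log (M / ‖g 0‖) / |Real.log r| := by
  obtain ⟨hr0, hr1⟩ := hr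
  set bound : ℝ → ℝ := fun ρ => Real.log (M / ρ ^ k / ‖g 0‖) / Real.log (ρ / r)
  have hjensen : ∀ ρ ∈ Ioo r 1,
      ((∑ᶠ u, divisor g (closedBall 0 r) u : ℤ) : ℝ) ≤ bound ρ := by
    rintro ρ ⟨hrρ, hρ1⟩
    have hρ : 0 < ρ := hr0.trans hrρ
    have hρk : 0 < ρ ^ k := pow_pos hρ k
    have hsphere : ∀ z ∈ sphere (0 : ℂ) |ρ|, ‖g z‖ ≤ M / ρ ^ k := fun z hz => by
      rw [mem_sphere_zero_iff_norm, abs_of_pos hρ] at hz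
      rw [le_div_iff₀' hρk, ← hz]
      exact hbound z (mem_ball_zero_iff.mpr (hz ▸ hρ1))
    have := hg.mono (closedBall_subset_ball (by rwa [abs_of_pos hρ]))
      |>.sum_divisor_le (r := r) (by rwa [abs_of_pos hr0])
        (by rwa [abs_of_pos hr0, abs_of_pos hρ])
        ((one_le_div hρk).mpr ((pow_le_one₀ hρ.le hρ1.le).trans hM)) hg0 hsphere
    rwa [abs_of_pos hr0] at this
  have hlog : Real.log (1 / r) ≠ 0 := by
    rw [one_div, Real.log_inv, neg_ne_zero]
    exact (Real.log_neg hr0 hr1).ne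
  have hcont : ContinuousAt bound 1 := by
    refine ContinuousAt.div (f := fun ρ : ℝ => Real.log (M / ρ ^ k / ‖g 0‖))
      (g := fun ρ : ℝ => Real.log (ρ / r)) ?_ ?_ hlog
    · exact ContinuousAt.log (by fun_prop (disch := simp)) (by simp [hg0]; linarith)
    · exact ContinuousAt.log (by fun_prop (disch := exact hr0.ne')) (by simp [hr0.ne'])
  have hbound1 : bound 1 = Real.log (M / ‖g 0‖) / |Real.log r| := by
    simp [bound, abs_of_neg (Real.log_neg hr0 hr1)]
  refine ge_of_tendsto (hbound1 ▸ hcont.continuousWithinAt.tendsto (s := Iio 1)) ?_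
  filter_upwards [Ioo_mem_nhdsLT hr1] using hjensen

theorem stmt0_general (F : ℂ → ℂ) (q : ℕ) (C : ℂ)
    (hbound : ∀ z ∈ closedBall (0 : ℂ) 1, ‖F z - z‖ ≤ 2)
    (g : ℂ → ℂ) (hg : AnalyticOnNhd ℂ g (ball (0 : ℂ) 1))
    (hrep : ∀ z ∈ ball (0 : ℂ) 1, F z - z = z ^ (q + 1) * g z)
    (hg0 : g 0 = C) (hC : C ≠ 0)
    -- `m z` is the multiplicity of `z` as a zero of `F - id`
    (m : ℂ → ℕ)
    (hm : ∀ z, ∀ hz : z ∈ ball (0 : ℂ) 1, analyticOrderAt (fun w => F w - w) z = (m z : ℕ∞))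
    (N : ℝ → ℕ)
    (hN : ∀ r ∈ Set.Ioo (0 : ℝ) 1, ∃ Z : Finset ℂ,
      (↑Z : Set ℂ) = {z | z ∈ ball (0 : ℂ) r ∧ z ≠ 0 ∧ F z = z} ∧
      N r = ∑ z ∈ Z, m z) :
    ∀ r ∈ Set.Ioo (0 : ℝ) 1,
      (N r : ℝ) ≤ (Real.log 2 - Real.log ‖C‖) / |Real.log r| := by
  intro r hr
  obtain ⟨Z, hZ, hNr⟩ := hN r hr
  have hmem : ∀ z ∈ Z, z ∈ ball (0 : ℂ) r ∧ z ≠ 0 := fun z hz => by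
    have hz' : z ∈ (↑Z : Set ℂ) := hz
    rw [hZ] at hz'
    exact ⟨hz'.1, hz'.2.1⟩
  have hZr : ↑Z ⊆ closedBall (0 : ℂ) r := fun z hz => ball_subset_closedBall (hmem z hz).1
  have hr1 : closedBall (0 : ℂ) r ⊆ ball 0 1 := closedBall_subset_ball hr.2
  have horder : ∀ z ∈ Z, analyticOrderAt g z = m z := fun z hz => by
    have hz1 : z ∈ ball (0 : ℂ) 1 := hr1 (hZr hz)
    rw [← analyticOrderAt_pow_mul_of_ne_zero (hg z hz1) (hmem z hz).2 (q + 1), ← hm z hz1]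
    exact (analyticOrderAt_congr (eventuallyEq_of_mem (isOpen_ball.mem_nhds hz1) hrep)).symm
  have hcount := (hg.mono hr1).sum_le_finsum_divisor (isCompact_closedBall 0 r) hZr horder
  have hjensen := hg.sum_divisor_le_of_norm_pow_mul_le (hg0 ▸ hC) one_le_two
    (fun w hw => by simpa [hrep w hw] using hbound w (ball_subset_closedBall hw)) hr
  rw [hg0, Real.log_div two_ne_zero (norm_ne_zero_iff.mpr hC)] at hjensen
  rw [hNr]
  exact le_trans (by exact_mod_cast hcount) hjensen

/-- A univalent map `F` on the unit disk, `F(0)=0`, `F'(0)=1`, with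
`|F z - z| ≤ 2` on the closed unit disk and `F z - z = z^(q+1) g z` with
`g 0 = C ≠ 0`, has at most `(log 2 - log |C|)/|log r|` fixed points (counted
with multiplicity, i.e. as zeros of `F z - z`) in `D(0,r) \ {0}` for each
`r ∈ (0,1)`. -/
theorem stmt0 (F : ℂ → ℂ) (q : ℕ) (C : ℂ)
    (hF : AnalyticOnNhd ℂ F (ball (0 : ℂ) 1))
    (hFan : ∀ z ∈ ball (0 : ℂ) 1, AnalyticAt ℂ (fun w => F w - w) z)
    (hinj : Set.InjOn F (ball (0 : ℂ) 1))
    (hF0 : F 0 = 0) (hF'0 : deriv F 0 = 1)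
    (hbound : ∀ z ∈ closedBall (0 : ℂ) 1, ‖F z - z‖ ≤ 2)
    (g : ℂ → ℂ) (hg : AnalyticOnNhd ℂ g (ball (0 : ℂ) 1))
    (hrep : ∀ z ∈ ball (0 : ℂ) 1, F z - z = z ^ (q + 1) * g z)
    (hg0 : g 0 = C) (hC : C ≠ 0)
    -- `m z` is the multiplicity of `z` as a zero of `F - id`
    (m : ℂ → ℕ)
    (hm : ∀ z, ∀ hz : z ∈ ball (0 : ℂ) 1, analyticOrderAt (fun w => F w - w) z = (m z : ℕ∞))
    (N : ℝ → ℕ)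
    (hN : ∀ r ∈ Set.Ioo (0 : ℝ) 1, ∃ Z : Finset ℂ,
      (↑Z : Set ℂ) = {z | z ∈ ball (0 : ℂ) r ∧ z ≠ 0 ∧ F z = z} ∧
      N r = ∑ z ∈ Z, m z) :
    ∀ r ∈ Set.Ioo (0 : ℝ) 1,
      (N r : ℝ) ≤ (Real.log 2 - Real.log ‖C‖) / |Real.log r| :=
  stmt0_general F q C hbound g hg hrep hg0 hC m hm N hN
end

section
/- Let L : D(0,r_1) → ℂ be a map, λ a primitive q-th root of unity, s = min(1, 1/C) for some constant C > 0, and z ∈ D(0,r_1)\{0}. Suppose for all 1 ≤ k ≤ q the iterate L^{∘k}(z) is defined and satisfies |L^{∘k}(z) − λ^k z| ≤ C·k·|z|/q². Then for all 1 ≤ k_1 < k_2 ≤ s·q, we have |L^{∘k_1}(z) − L^{∘k_2}(z)| ≥ 2|z|/q; in particular the points L^{∘k}(z) for 1 ≤ k ≤ s·q are pairwise distinct. -/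
/-!
The rotated points `λ^k z`, `1 ≤ k ≤ q`, are pairwise at distance at least `4|z|/q`, since a
`q`-th root of unity other than `1` is at distance at least `4/q` from `1` (Jordan's inequality
`sin x ≥ 2x/π`). For `k ≤ s q` the hypothesis puts `L^[k] z` within `C k |z|/q² ≤ |z|/q` of
`λ^k z`, so the triangle inequality leaves a gap of at least `2|z|/q`.
-/

namespace Real

theorem two_div_pi_mul_min_le_sin {x : ℝ} (hx₀ : 0 ≤ x) (hxπ : x ≤ π) :
    2 / π * min x (π - x) ≤ sin x := by
  have hπ := pi_pos
  rcases le_total x (π / 2) with hx | hx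
  · exact (mul_le_mul_of_nonneg_left (min_le_left _ _) (by positivity)).trans (mul_le_sin hx₀ hx)
  · rw [← sin_pi_sub]
    exact (mul_le_mul_of_nonneg_left (min_le_right _ _) (by positivity)).trans
      (mul_le_sin (by linarith) (by linarith))

theorem two_div_le_sin_pi_mul_div {j q : ℕ} (hj : 0 < j) (hjq : j < q) :
    2 / q ≤ sin (π * j / q) := by
  have hπ := pi_pos
  have hq : (0 : ℝ) < q := by exact_mod_cast hj.trans hjq
  have hj₁ : (1 : ℝ) ≤ j := by exact_mod_cast hj
  have hjq₁ : (j : ℝ) + 1 ≤ q := by exact_mod_cast hjq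
  have hmin : π / q ≤ min (π * j / q) (π - π * j / q) := by
    refine le_min (div_le_div_of_nonneg_right (le_mul_of_one_le_right hπ.le hj₁) hq.le) ?_
    rw [show π - π * j / q = π * (q - j) / q by field_simp]
    exact div_le_div_of_nonneg_right (le_mul_of_one_le_right hπ.le (by linarith)) hq.le
  calc 2 / (q : ℝ) = 2 / π * (π / q) := by field_simp
    _ ≤ 2 / π * min (π * j / q) (π - π * j / q) := by gcongr
    _ ≤ sin (π * j / q) :=
      two_div_pi_mul_min_le_sin (by positivity) (by rw [div_le_iff₀ hq]; nlinarith)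

end Real

open Real in
theorem Complex.four_div_le_norm_sub_one_of_pow_eq_one {q : ℕ} {ζ : ℂ} (hζq : ζ ^ q = 1)
    (hζ₁ : ζ ≠ 1) : 4 / q ≤ ‖ζ - 1‖ := by
  rcases Nat.eq_zero_or_pos q with rfl | hq
  · simp
  have : NeZero q := ⟨hq.ne'⟩
  obtain ⟨j, hjq, rfl⟩ := (isPrimitiveRoot_exp q hq.ne').eq_pow_of_pow_eq_one hζq
  have hj : 0 < j := Nat.pos_of_ne_zero (by rintro rfl; exact hζ₁ (pow_zero _))
  have hexp : exp (2 * π * I / q) ^ j = exp (I * ↑(2 * π * j / q)) := by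
    rw [← exp_nat_mul]; push_cast; ring_nf
  have hsin := two_div_le_sin_pi_mul_div hj hjq
  rw [hexp, norm_exp_I_mul_ofReal_sub_one, norm_mul, Real.norm_two, Real.norm_eq_abs,
    show 2 * π * j / q / 2 = π * j / q by ring,
    abs_of_nonneg ((div_nonneg zero_le_two q.cast_nonneg).trans hsin)]
  linarith [show (4 : ℝ) / q = 2 * (2 / q) by ring]

theorem IsPrimitiveRoot.four_div_mul_norm_le_norm_pow_mul_sub {q : ℕ} {ζ : ℂ}
    (hζ : IsPrimitiveRoot ζ q) {k₁ k₂ : ℕ} (hk : k₁ < k₂) (hkq : k₂ < k₁ + q) (z : ℂ) :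
    4 / q * ‖z‖ ≤ ‖ζ ^ k₁ * z - ζ ^ k₂ * z‖ := by
  obtain ⟨m, rfl⟩ := Nat.exists_eq_add_of_lt hk
  have hζm : ζ ^ (m + 1) ≠ 1 := hζ.pow_ne_one_of_pos_of_lt m.succ_ne_zero (by omega)
  have hζmq : (ζ ^ (m + 1)) ^ q = 1 := by
    rw [← pow_mul, mul_comm, pow_mul, hζ.pow_eq_one, one_pow]
  have hnorm : ‖ζ ^ k₁ * z - ζ ^ (k₁ + m + 1) * z‖ = ‖ζ ^ (m + 1) - 1‖ * ‖z‖ := by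
    rw [show ζ ^ k₁ * z - ζ ^ (k₁ + m + 1) * z = -(ζ ^ k₁ * (ζ ^ (m + 1) - 1) * z) by ring,
      norm_neg, norm_mul, norm_mul, norm_pow, hζ.norm'_eq_one (by omega), one_pow, one_mul]
  rw [hnorm]
  gcongr
  exact Complex.four_div_le_norm_sub_one_of_pow_eq_one hζmq hζm

open Metric

theorem stmt3_general (L : ℂ → ℂ) (p q : ℕ) (hq : 0 < q) (hpq : Nat.Coprime p q)
    (lam : ℂ) (hlam : lam = Complex.exp (2 * Real.pi * Complex.I * (p / q)))
    (Cc : ℝ) (hCc : 0 < Cc) (s : ℝ) (hs : s = min 1 (1 / Cc))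
    (z : ℂ) (hz0 : z ≠ 0)
    (hiter : ∀ k : ℕ, 1 ≤ k → k ≤ q →
      ‖L^[k] z - lam ^ k * z‖ ≤ Cc * k * ‖z‖ / (q : ℝ) ^ 2) :
    ∀ k₁ k₂ : ℕ, 1 ≤ k₁ → k₁ < k₂ → (k₂ : ℝ) ≤ s * q →
      2 * ‖z‖ / q ≤ ‖L^[k₁] z - L^[k₂] z‖ ∧ L^[k₁] z ≠ L^[k₂] z := by
  intro k₁ k₂ hk₁ hk₁₂ hk₂
  have hqR : (0 : ℝ) < q := by exact_mod_cast hq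
  have hCs : Cc * s ≤ 1 := by rw [hs, ← le_div_iff₀' hCc]; exact min_le_right _ _
  have hk₂q : k₂ ≤ q := by
    have : s ≤ 1 := hs ▸ min_le_left _ _
    exact_mod_cast hk₂.trans (mul_le_of_le_one_left hqR.le this)
  have herr : ∀ k, 1 ≤ k → k ≤ k₂ → ‖L^[k] z - lam ^ k * z‖ ≤ ‖z‖ / q := by
    intro k hk hkk₂
    have hCk : Cc * k ≤ q := by
      have : (k : ℝ) ≤ s * q := le_trans (by exact_mod_cast hkk₂) hk₂
      nlinarith
    calc ‖L^[k] z - lam ^ k * z‖ ≤ Cc * k * ‖z‖ / (q : ℝ) ^ 2 := hiter k hk (hkk₂.trans hk₂q)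
      _ ≤ q * ‖z‖ / (q : ℝ) ^ 2 := by gcongr
      _ = ‖z‖ / q := by field_simp
  have hζ : IsPrimitiveRoot lam q := hlam ▸ Complex.isPrimitiveRoot_exp_of_coprime p q hq.ne' hpq
  have hsep := hζ.four_div_mul_norm_le_norm_pow_mul_sub hk₁₂ (by omega) z
  have htri := dist_triangle4 (lam ^ k₁ * z) (L^[k₁] z) (L^[k₂] z) (lam ^ k₂ * z)
  simp only [dist_eq_norm] at htri
  rw [norm_sub_rev (lam ^ k₁ * z) (L^[k₁] z)] at htri
  have hgap : 2 * ‖z‖ / q ≤ ‖L^[k₁] z - L^[k₂] z‖ := by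
    linarith [herr k₁ hk₁ hk₁₂.le, herr k₂ (by omega) le_rfl,
      show 4 / q * ‖z‖ = 2 * ‖z‖ / q + ‖z‖ / q + ‖z‖ / q by ring]
  refine ⟨hgap, fun h => ?_⟩
  rw [h, sub_self, norm_zero] at hgap
  linarith [show 0 < 2 * ‖z‖ / q by positivity]

/-- If the iterates of `L` on a point `z ≠ 0` stay within `C k |z|/q²` of the
rigid rotation orbit `λ^k z`, where `λ` is a primitive `q`-th root of unity,
then for `s = min(1, 1/C)` the points `L^[k] z`, `1 ≤ k ≤ s q`, are at pairwise
distance at least `2|z|/q`; in particular they are pairwise distinct. -/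
theorem stmt3 (L : ℂ → ℂ) (p q : ℕ) (hq : 0 < q) (hpq : Nat.Coprime p q)
    (lam : ℂ) (hlam : lam = Complex.exp (2 * Real.pi * Complex.I * (p / q)))
    (Cc : ℝ) (hCc : 0 < Cc) (s : ℝ) (hs : s = min 1 (1 / Cc))
    (r₁ : ℝ) (z : ℂ) (hz : z ∈ ball (0 : ℂ) r₁) (hz0 : z ≠ 0)
    (hiter : ∀ k : ℕ, 1 ≤ k → k ≤ q →
      ‖L^[k] z - lam ^ k * z‖ ≤ Cc * k * ‖z‖ / (q : ℝ) ^ 2) :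
    ∀ k₁ k₂ : ℕ, 1 ≤ k₁ → k₁ < k₂ → (k₂ : ℝ) ≤ s * q →
      2 * ‖z‖ / q ≤ ‖L^[k₁] z - L^[k₂] z‖ ∧ L^[k₁] z ≠ L^[k₂] z :=
  stmt3_general L p q hq hpq lam hlam Cc hCc s hs z hz0 hiter
end

section
/- Let ℓ be holomorphic on the left half-plane P = {w ∈ ℂ : Re w < ρ} with ℓ'(w) = q + k'(e^w)·e^w where q > 0 and |k'(e^w)·e^w| ≤ q/4 for all w ∈ P. Then for any c ∈ ℝ, any two distinct points w_1 ≠ w_2 on the level curve {w ∈ P : Im ℓ(w) = c} satisfy arg(w_2 − w_1) ∈ (−π/6, π/6) + πℤ. -/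
open Real Metric

/-!
The mean value inequality for `w ↦ ℓ w - q w`, whose derivative is bounded by `q / 4`, gives
`‖(ℓ w₂ - ℓ w₁) - q (w₂ - w₁)‖ ≤ (q / 4) ‖w₂ - w₁‖`. On a level curve `ℓ w₂ - ℓ w₁` is real, so
the imaginary part yields `|Im (w₂ - w₁)| ≤ ‖w₂ - w₁‖ / 4`, that is
`|sin (arg (w₂ - w₁))| ≤ 1 / 4 < sin (π / 6)`.
-/

lemma abs_lt_pi_div_six_of_abs_sin_lt {θ : ℝ} (hθ : |θ| ≤ π / 2) (h : |sin θ| < 1 / 2) :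
    |θ| < π / 6 := by
  obtain ⟨hθl, hθu⟩ := abs_le.1 hθ
  obtain ⟨hsl, hsu⟩ := abs_lt.1 h
  have hπ := pi_pos
  refine abs_lt.2 ⟨?_, ?_⟩ <;> by_contra! hθ6
  · have := sin_le_sin_of_le_of_le_pi_div_two hθl (by linarith) hθ6
    rw [sin_neg, sin_pi_div_six] at this
    linarith
  · have := sin_le_sin_of_le_of_le_pi_div_two (by linarith) hθu hθ6
    rw [sin_pi_div_six] at this
    linarith

lemma exists_mem_Ioo_pi_div_six_of_abs_sin_lt {θ : ℝ} (h : |sin θ| < 1 / 2) :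
    ∃ m : ℤ, θ ∈ Set.Ioo (-π / 6 + m * π) (π / 6 + m * π) := by
  -- shifting by the nearest multiple of `π` preserves `|sin|` and lands in `[-π/2, π/2]`
  set m := round (θ / π)
  have hπ := pi_pos
  have hshift : |θ - m * π| ≤ π / 2 := by
    have hθ : θ - m * π = (θ / π - m) * π := by field_simp
    rw [hθ, abs_mul, abs_of_pos hπ]
    nlinarith [abs_sub_round (θ / π)]
  have hsin : |sin (θ - m * π)| < 1 / 2 := by
    rwa [sin_sub_int_mul_pi, abs_mul, abs_zpow, abs_neg, abs_one, one_zpow, one_mul]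
  obtain ⟨h₁, h₂⟩ := abs_lt.1 (abs_lt_pi_div_six_of_abs_sin_lt hshift hsin)
  exact ⟨m, by constructor <;> linarith⟩

lemma exists_arg_mem_Ioo_pi_div_six_of_two_mul_abs_im_lt {z : ℂ} (h : 2 * |z.im| < ‖z‖) :
    ∃ m : ℤ, z.arg ∈ Set.Ioo (-π / 6 + m * π) (π / 6 + m * π) := by
  have hz : 0 < ‖z‖ := (mul_nonneg zero_le_two (abs_nonneg _)).trans_lt h
  refine exists_mem_Ioo_pi_div_six_of_abs_sin_lt ?_
  rw [Complex.sin_arg, abs_div, abs_norm, div_lt_iff₀ hz]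
  linarith

lemma mul_abs_im_sub_le_of_im_eq {f : ℂ → ℂ} {s : Set ℂ} {q C : ℝ} {x y : ℂ}
    (hs : Convex ℝ s) (hf : ∀ w ∈ s, DifferentiableAt ℂ f w)
    (hf' : ∀ w ∈ s, ‖deriv f w - q‖ ≤ C) (hx : x ∈ s) (hy : y ∈ s)
    (him : (f x).im = (f y).im) :
    q * |(y - x).im| ≤ C * ‖y - x‖ := by
  set g : ℂ → ℂ := fun w ↦ f w - q * w
  have hg : ∀ w ∈ s, HasDerivAt g (deriv f w - q) w := fun w hw ↦ by
    have hlin := (hasDerivAt_id' w).const_mul (q : ℂ)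
    rw [mul_one] at hlin
    exact (hf w hw).hasDerivAt.sub hlin
  have hmvt := hs.norm_image_sub_le_of_norm_deriv_le (fun w hw ↦ (hg w hw).differentiableAt)
    (fun w hw ↦ (hg w hw).deriv ▸ hf' w hw) hx hy
  have hgim : (g y - g x).im = -(q * (y - x).im) := by
    simp only [g, Complex.sub_im, Complex.im_ofReal_mul, him]
    ring
  calc q * |(y - x).im| ≤ |q * (y - x).im| := by
        rw [abs_mul]; exact mul_le_mul_of_nonneg_right (le_abs_self q) (abs_nonneg _)
    _ = |(g y - g x).im| := by rw [hgim, abs_neg]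
    _ ≤ ‖g y - g x‖ := Complex.abs_im_le_norm _
    _ ≤ C * ‖y - x‖ := hmvt

/-- If `ℓ' (w) = q + k'(e^w) e^w` on the left half-plane `{Re w < ρ}` with
`|k'(e^w) e^w| ≤ q/4`, then any two distinct points on a level curve of
`Im ℓ` see each other in a direction making angle less than `π/6` with the
real axis: `arg (w₂ - w₁) ∈ (-π/6, π/6) + πℤ`. -/
theorem stmt9 (ρ : ℝ) (q : ℝ) (hq : 0 < q) (ℓ k : ℂ → ℂ)
    (hℓ : AnalyticOnNhd ℂ ℓ {w : ℂ | w.re < ρ})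
    (hderiv : ∀ w ∈ {w : ℂ | w.re < ρ},
      deriv ℓ w = (q : ℂ) + deriv k (Complex.exp w) * Complex.exp w)
    (hbd : ∀ w ∈ {w : ℂ | w.re < ρ},
      ‖deriv k (Complex.exp w) * Complex.exp w‖ ≤ q / 4)
    (c : ℝ) (w₁ w₂ : ℂ) (hw₁ : w₁.re < ρ) (hw₂ : w₂.re < ρ)
    (hne : w₁ ≠ w₂) (hc₁ : (ℓ w₁).im = c) (hc₂ : (ℓ w₂).im = c) :
    ∃ m : ℤ, (w₂ - w₁).arg ∈ Set.Ioo (-π / 6 + m * π) (π / 6 + m * π) := by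
  have hslope : q * |(w₂ - w₁).im| ≤ q / 4 * ‖w₂ - w₁‖ :=
    mul_abs_im_sub_le_of_im_eq (convex_halfSpace_re_lt ρ)
      (fun w hw ↦ (hℓ w hw).differentiableAt)
      (fun w hw ↦ by simpa [hderiv w hw] using hbd w hw) hw₁ hw₂ (hc₁.trans hc₂.symm)
  have hv : 0 < ‖w₂ - w₁‖ := norm_pos_iff.2 (sub_ne_zero.2 hne.symm)
  refine exists_arg_mem_Ioo_pi_div_six_of_two_mul_abs_im_lt ?_
  nlinarith
end

section
/- Let f(z) = λz + O(z²) be holomorphic near 0 with λ a primitive q-th root of unity, and write f^{∘q}(z) = z + Σ_{n≥2} b_n z^n. Then b_n = 0 for all 2 ≤ n ≤ q (i.e. the first possibly-nonzero coefficient of f^{∘q} − id is that of z^{q+1}), provided f^{∘q} ≠ id. -/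
/-!
Write `g = f^[q] = id + b z^m + o(z^m)` with `m ≥ 2` the first index such that
`b = p.coeff m ≠ 0`. Expanding both sides of `g ∘ f = f ∘ g` to order `z^m`, using
`f z = λ z + o(z)` on the left and the strict differentiability of `f` at `0` on the right,
gives `b λ^m = λ b`. Hence `λ^(m-1) = 1`, so `q ∣ m - 1` and `m > q`.
-/

open Filter Asymptotics Topology

theorem IsPrimitiveRoot.dvd_sub_one_of_pow_eq_self {M : Type*} [CommMonoid M] {ζ : M} {k m : ℕ}
    (h : IsPrimitiveRoot ζ k) (hk : k ≠ 0) (hm : ζ ^ m = ζ) : k ∣ m - 1 := by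
  rcases m with _ | m
  · simp
  · refine h.dvd_of_pow_eq_one _ ((h.isUnit hk).mul_left_cancel ?_)
    rw [Nat.add_sub_cancel, ← pow_succ', hm, mul_one]

section

variable {𝕜 : Type*} [NontriviallyNormedField 𝕜]

theorem HasFPowerSeriesAt.isBigO_sub_sum_coeff {h : 𝕜 → 𝕜}
    {p : FormalMultilinearSeries 𝕜 𝕜 𝕜} (hp : HasFPowerSeriesAt h p 0) (n : ℕ) :
    (fun z => h z - ∑ k ∈ Finset.range (n + 1), z ^ k * p.coeff k) =O[𝓝 0]
      fun z => z ^ (n + 1) := by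
  simpa [FormalMultilinearSeries.partialSum, smul_eq_mul] using
    (hp.isBigO_sub_partialSum_pow (n + 1)).trans_le (fun z => by simp)

theorem HasFPowerSeriesAt.isLittleO_sub_id_sub_coeff {g : 𝕜 → 𝕜}
    {p : FormalMultilinearSeries 𝕜 𝕜 𝕜} {m : ℕ} (hp : HasFPowerSeriesAt g p 0) (hm : 1 < m)
    (h1 : p.coeff 1 = 1) (hk : ∀ k < m, k ≠ 1 → p.coeff k = 0) :
    (fun z => g z - z - p.coeff m * z ^ m) =o[𝓝 0] fun z => z ^ m := by
  have hsum (z : 𝕜) :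
      ∑ k ∈ Finset.range (m + 1), z ^ k * p.coeff k = z + p.coeff m * z ^ m := by
    rw [Finset.sum_range_succ, Finset.sum_eq_single_of_mem 1 (Finset.mem_range.mpr hm)
      fun k hkm hk1 => by rw [hk k (Finset.mem_range.mp hkm) hk1, mul_zero], h1, pow_one, mul_one,
      mul_comm]
  refine ((hp.isBigO_sub_sum_coeff m).trans_isLittleO (isLittleO_pow_pow m.lt_succ_self)).congr_left
    fun z => ?_
  rw [hsum]
  ring

theorem HasStrictDerivAt.isLittleO_comp_sub {f : 𝕜 → 𝕜} {f' x : 𝕜}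
    (hf : HasStrictDerivAt f f' x) {α : Type*} {l : Filter α} {u v : α → 𝕜}
    (hu : Tendsto u l (𝓝 x)) (hv : Tendsto v l (𝓝 x)) :
    (fun t => f (u t) - f (v t) - (u t - v t) * f') =o[l] fun t => u t - v t :=
  (hasDerivAtFilter_iff_isLittleO.mp hf).comp_tendsto (hu.prodMk_nhds hv)

theorem HasDerivAt.tendsto_div_self {f : 𝕜 → 𝕜} {f' : 𝕜} (hf : HasDerivAt f f' 0)
    (hf0 : f 0 = 0) :
    Tendsto (fun z => f z / z) (𝓝[≠] 0) (𝓝 f') := by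
  simpa [hf0, div_eq_inv_mul] using hasDerivAt_iff_tendsto_slope_zero.mp hf

theorem Function.Commute.mul_pow_eq_of_isLittleO {f g : 𝕜 → 𝕜} {lam b : 𝕜} {m : ℕ}
    (hcomm : Function.Commute f g) (hf : HasStrictDerivAt f lam 0) (hf0 : f 0 = 0)
    (hlam : lam ≠ 0) (hg : Tendsto g (𝓝 0) (𝓝 0))
    (hgb : (fun z => g z - z - b * z ^ m) =o[𝓝 0] fun z => z ^ m) :
    b * lam ^ m = lam * b := by
  have hratio : Tendsto (fun z => (g z - z) / z ^ m) (𝓝[≠] 0) (𝓝 b) := by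
    rw [← tendsto_sub_nhds_zero_iff]
    refine (hgb.mono nhdsWithin_le_nhds).tendsto_div_nhds_zero.congr' ?_
    filter_upwards [self_mem_nhdsWithin] with z (hz : z ≠ 0)
    field_simp
  have hgO : (fun z => g z - z) =O[𝓝 0] fun z => z ^ m :=
    (hgb.isBigO.add ((isBigO_refl _ _).const_mul_left b)).congr_left fun z => by ring
  have hf_ne : Tendsto f (𝓝[≠] 0) (𝓝[≠] 0) := by
    simpa only [hf0] using hf.hasDerivAt.tendsto_nhdsNE hlam
  have hgf : Tendsto (fun z => (g (f z) - f z) / z ^ m) (𝓝[≠] 0) (𝓝 (b * lam ^ m)) := by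
    refine ((hratio.comp hf_ne).mul ((hf.hasDerivAt.tendsto_div_self hf0).pow m)).congr' ?_
    filter_upwards [hf_ne self_mem_nhdsWithin, self_mem_nhdsWithin]
      with z (hfz : f z ≠ 0) (hz : z ≠ 0)
    rw [Function.comp_apply, div_pow]
    field_simp
  have hfg : Tendsto (fun z => (f (g z) - f z) / z ^ m) (𝓝[≠] 0) (𝓝 (lam * b)) := by
    have hrem := (hf.isLittleO_comp_sub hg tendsto_id).trans_isBigO hgO
    have hlin := (hratio.const_mul lam).add (hrem.mono nhdsWithin_le_nhds).tendsto_div_nhds_zero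
    rw [add_zero] at hlin
    refine hlin.congr fun z => ?_
    simp only [id]
    ring
  refine tendsto_nhds_unique ?_ hfg
  simpa only [hcomm.eq] using hgf

end

theorem stmt15_general (q : ℕ) (lam : ℂ) (hlam : IsPrimitiveRoot lam q)
    (f : ℂ → ℂ) (hf : AnalyticAt ℂ f 0) (hf0 : f 0 = 0)
    (hf' : deriv f 0 = lam)
    (p : FormalMultilinearSeries ℂ ℂ ℂ) (hp : HasFPowerSeriesAt (f^[q]) p 0) :
    ∀ n : ℕ, 2 ≤ n → n ≤ q → p.coeff n = 0 := by
  intro n hn hnq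
  by_contra hpn
  have hex : ∃ k, 2 ≤ k ∧ p.coeff k ≠ 0 := ⟨n, hn, hpn⟩
  set m := Nat.find hex
  obtain ⟨hm, hpm⟩ : 2 ≤ m ∧ p.coeff m ≠ 0 := Nat.find_spec hex
  have hmq : m ≤ q := (Nat.find_min' hex ⟨hn, hpn⟩).trans hnq
  have hfs : HasStrictDerivAt f lam 0 := hf' ▸ hf.hasStrictDerivAt
  have h0 : p.coeff 0 = 0 := (hp.coeff_zero 1).trans (Function.iterate_fixed hf0 q)
  have h1 : p.coeff 1 = 1 :=
    (hp.hasDerivAt.unique (hfs.hasDerivAt.iterate 0 hf0 q)).trans hlam.pow_eq_one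
  have hk : ∀ k < m, k ≠ 1 → p.coeff k = 0 := fun k hkm hk1 => by
    obtain rfl | hk2 : k = 0 ∨ 2 ≤ k := by omega
    exacts [h0, not_ne_iff.mp fun hpk => Nat.find_min hex hkm ⟨hk2, hpk⟩]
  have hg : Tendsto f^[q] (𝓝 0) (𝓝 0) := by
    simpa [Function.iterate_fixed hf0] using hp.continuousAt.tendsto
  have hcoeff : p.coeff m * lam ^ m = lam * p.coeff m :=
    (Function.Commute.self_iterate f q).mul_pow_eq_of_isLittleO hfs hf0
      (hlam.ne_zero (by omega)) hg (hp.isLittleO_sub_id_sub_coeff hm h1 hk)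
  have hdvd : q ∣ m - 1 := hlam.dvd_sub_one_of_pow_eq_self (by omega)
    (mul_left_cancel₀ hpm (hcoeff.trans (mul_comm _ _)))
  have := Nat.le_of_dvd (by omega) hdvd
  omega

/-- If `f(z) = λ z + O(z²)` near `0` with `λ` a primitive `q`-th root of unity
and `f^[q]` is not the identity near `0`, then writing
`f^[q] z = z + ∑_{n≥2} b_n z^n`, all coefficients `b_n` with `2 ≤ n ≤ q`
vanish: the first possibly-nonzero coefficient of `f^[q] - id` is that of
`z^(q+1)`. -/
theorem stmt15 (q : ℕ) (hq : 0 < q) (lam : ℂ) (hlam : IsPrimitiveRoot lam q)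
    (f : ℂ → ℂ) (hf : AnalyticAt ℂ f 0) (hf0 : f 0 = 0)
    (hf' : deriv f 0 = lam)
    (hnontriv : ¬ ∀ᶠ z in nhds (0 : ℂ), f^[q] z = z)
    (p : FormalMultilinearSeries ℂ ℂ ℂ) (hp : HasFPowerSeriesAt (f^[q]) p 0) :
    ∀ n : ℕ, 2 ≤ n → n ≤ q → p.coeff n = 0 :=
  stmt15_general q lam hlam f hf hf0 hf' p hp
end

section
/- Let (u_n) be a sequence of holomorphic functions on a domain Ω ⊂ ℂ, and suppose Re u_n converges uniformly on compact subsets of Ω to Re u for some holomorphic u, and u_n(a_0) → u(a_0) at some point a_0 ∈ Ω. Then u_n → u uniformly on compact subsets of Ω. -/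
/-!
Apply the Borel–Carathéodory inequality to `u n - u`: on a disc `closedBall c R ⊆ Ω` its
real part is uniformly small, so on the half disc `u n - u` is bounded by a multiple of that
bound plus `‖u n c - u c‖`. Hence pointwise convergence at a centre propagates to uniform
convergence on the half disc. The set of points of `Ω` where `u n → u` pointwise is therefore
open and closed in `Ω` and contains `a₀`, so it is all of `Ω`, and the half discs then give
locally uniform convergence on `Ω`.
-/

open Metric Set Filter Topology

lemma Complex.norm_le_of_re_le_on_ball {f : ℂ → ℂ} {c z : ℂ} {R M : ℝ} (hM : 0 < M)
    (hR : 0 < R) (hf : DifferentiableOn ℂ f (ball c R))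
    (hre : MapsTo f (ball c R) {w | w.re ≤ M}) (hz : z ∈ closedBall c (R / 2)) :
    ‖f z‖ ≤ 2 * M + 3 * ‖f c‖ := by
  have hshift : MapsTo (c + ·) (ball 0 R) (ball c R) := fun w hw => by simpa using hw
  have hzc : ‖z - c‖ ≤ R / 2 := by simpa [dist_eq_norm] using hz
  have hbc := borelCaratheodory hM (hf.comp (by fun_prop) hshift) (hre.comp hshift) hR
    (z := z - c) (by rw [mem_ball_zero_iff]; linarith)
  simp only [Function.comp_apply, add_sub_cancel, add_zero] at hbc
  have hden : 0 < R - ‖z - c‖ := by linarith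
  calc ‖f z‖
      ≤ 2 * M * ‖z - c‖ / (R - ‖z - c‖) + ‖f c‖ * (R + ‖z - c‖) / (R - ‖z - c‖) := hbc
    _ ≤ 2 * M + 3 * ‖f c‖ := by
      rw [← add_div, div_le_iff₀ hden]
      nlinarith [norm_nonneg (f c), norm_nonneg (z - c)]

section
variable {ι : Type*} {l : Filter ι} {F : ι → ℂ → ℂ} {f : ℂ → ℂ}

theorem tendstoUniformlyOn_closedBall_half_of_re {c : ℂ} {R : ℝ} (hR : 0 < R)
    (hF : ∀ i, DifferentiableOn ℂ (F i) (ball c R)) (hf : DifferentiableOn ℂ f (ball c R))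
    (hre : TendstoUniformlyOn (fun i z => (F i z).re) (fun z => (f z).re) l (ball c R))
    (hc : Tendsto (F · c) l (𝓝 (f c))) :
    TendstoUniformlyOn F f l (closedBall c (R / 2)) := by
  rw [Metric.tendstoUniformlyOn_iff] at hre ⊢
  intro ε hε
  have hδ : 0 < ε / 5 := by positivity
  filter_upwards [hre _ hδ, Metric.tendsto_nhds.1 hc _ hδ] with i hre_i hc_i z hz
  have hdiff_re : MapsTo (F i - f) (ball c R) {w | w.re ≤ ε / 5} := fun w hw => by
    have := hre_i w hw
    rw [Real.dist_eq, abs_lt] at this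
    show (F i w - f w).re ≤ ε / 5
    rw [Complex.sub_re]
    linarith
  have hbound := Complex.norm_le_of_re_le_on_ball hδ hR ((hF i).sub hf) hdiff_re hz
  rw [dist_eq_norm] at hc_i
  rw [dist_eq_norm, norm_sub_rev]
  simp only [Pi.sub_apply] at hbound
  linarith

variable {Ω : Set ℂ}

theorem tendstoUniformlyOn_closedBall_half_of_re_of_subset
    (hF : ∀ i, DifferentiableOn ℂ (F i) Ω) (hf : DifferentiableOn ℂ f Ω)
    (hre : ∀ K ⊆ Ω, IsCompact K →
      TendstoUniformlyOn (fun i z => (F i z).re) (fun z => (f z).re) l K)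
    {c : ℂ} {R : ℝ} (hR : 0 < R) (hsub : closedBall c R ⊆ Ω)
    (hc : Tendsto (F · c) l (𝓝 (f c))) :
    TendstoUniformlyOn F f l (closedBall c (R / 2)) :=
  have hball : ball c R ⊆ Ω := ball_subset_closedBall.trans hsub
  tendstoUniformlyOn_closedBall_half_of_re hR (fun i => (hF i).mono hball) (hf.mono hball)
    ((hre _ hsub (isCompact_closedBall c R)).mono ball_subset_closedBall) hc

theorem tendsto_of_re_of_isPreconnected (hΩ : IsOpen Ω) (hconn : IsPreconnected Ω)
    (hF : ∀ i, DifferentiableOn ℂ (F i) Ω) (hf : DifferentiableOn ℂ f Ω)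
    (hre : ∀ K ⊆ Ω, IsCompact K →
      TendstoUniformlyOn (fun i z => (F i z).re) (fun z => (f z).re) l K)
    {a₀ : ℂ} (ha₀ : a₀ ∈ Ω) (hpt : Tendsto (F · a₀) l (𝓝 (f a₀))) :
    ∀ c ∈ Ω, Tendsto (F · c) l (𝓝 (f c)) := by
  set S := {c | c ∈ Ω ∧ Tendsto (F · c) l (𝓝 (f c))}
  have hS_open : IsOpen S := isOpen_iff_mem_nhds.2 fun c ⟨hcΩ, hc⟩ => by
    obtain ⟨R, hR, hsub⟩ := nhds_basis_closedBall.mem_iff.1 (hΩ.mem_nhds hcΩ)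
    filter_upwards [closedBall_mem_nhds c (half_pos hR)] with z hz
    exact ⟨hsub (closedBall_subset_closedBall (by linarith) hz),
      (tendstoUniformlyOn_closedBall_half_of_re_of_subset hF hf hre hR hsub hc).tendsto_at hz⟩
  have hS_closed : closure S ∩ Ω ⊆ S := by
    rintro c ⟨hcS, hcΩ⟩
    obtain ⟨R, hR, hsub⟩ := nhds_basis_closedBall.mem_iff.1 (hΩ.mem_nhds hcΩ)
    obtain ⟨d, ⟨-, hd⟩, hcd⟩ := Metric.mem_closure_iff.1 hcS (R / 4) (by positivity)
    have hsub' : closedBall d (R / 2) ⊆ Ω :=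
      (closedBall_subset_closedBall' (by rw [dist_comm]; linarith)).trans hsub
    exact ⟨hcΩ, (tendstoUniformlyOn_closedBall_half_of_re_of_subset hF hf hre (half_pos hR) hsub'
      hd).tendsto_at (by rw [mem_closedBall]; linarith)⟩
  exact fun c hc => (hconn.subset_of_closure_inter_subset hS_open ⟨a₀, ha₀, ha₀, hpt⟩
    hS_closed hc).2

theorem tendstoLocallyUniformlyOn_of_re_of_isPreconnected (hΩ : IsOpen Ω)
    (hconn : IsPreconnected Ω) (hF : ∀ i, DifferentiableOn ℂ (F i) Ω)
    (hf : DifferentiableOn ℂ f Ω)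
    (hre : ∀ K ⊆ Ω, IsCompact K →
      TendstoUniformlyOn (fun i z => (F i z).re) (fun z => (f z).re) l K)
    {a₀ : ℂ} (ha₀ : a₀ ∈ Ω) (hpt : Tendsto (F · a₀) l (𝓝 (f a₀))) :
    TendstoLocallyUniformlyOn F f l Ω := by
  refine tendstoLocallyUniformlyOn_of_forall_exists_nhds fun c hc => ?_
  obtain ⟨R, hR, hsub⟩ := nhds_basis_closedBall.mem_iff.1 (hΩ.mem_nhds hc)
  exact ⟨_, nhdsWithin_le_nhds (closedBall_mem_nhds c (half_pos hR)),
    tendstoUniformlyOn_closedBall_half_of_re_of_subset hF hf hre hR hsub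
      (tendsto_of_re_of_isPreconnected hΩ hconn hF hf hre ha₀ hpt c hc)⟩

end

/-- If holomorphic functions `u_n` on an open connected `Ω ⊆ ℂ` have real
parts converging uniformly on compacts to the real part of a holomorphic `u`,
and `u_n (a₀) → u (a₀)` at one point `a₀ ∈ Ω`, then `u_n → u` uniformly on
compact subsets of `Ω`. -/
theorem stmt16 (Ω : Set ℂ) (hΩ : IsOpen Ω) (hconn : IsConnected Ω)
    (un : ℕ → ℂ → ℂ) (u : ℂ → ℂ)
    (hun : ∀ n, AnalyticOnNhd ℂ (un n) Ω) (hu : AnalyticOnNhd ℂ u Ω)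
    (hre : ∀ K ⊆ Ω, IsCompact K →
      TendstoUniformlyOn (fun n z => (un n z).re) (fun z => (u z).re)
        Filter.atTop K)
    (a₀ : ℂ) (ha₀ : a₀ ∈ Ω)
    (hpt : Filter.Tendsto (fun n => un n a₀) Filter.atTop (nhds (u a₀))) :
    ∀ K ⊆ Ω, IsCompact K → TendstoUniformlyOn un u Filter.atTop K :=
  (tendstoLocallyUniformlyOn_iff_forall_isCompact hΩ).1 <|
    tendstoLocallyUniformlyOn_of_re_of_isPreconnected hΩ hconn.isPreconnected
      (fun n => (hun n).differentiableOn) hu.differentiableOn hre ha₀ hpt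
end
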